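/- arXiv:2512.23679 — 4 statements merged into one kernel-verified Lean document; each statement's English description precedes it below -/
import Mathlib

section
/- For every integer t ≥ 1, the central binomial coefficient satisfies C(2t, t) ≤ 4^t / √(π·t). -/
open Stirling Real Filter Topology Nat in
theorem stmt_7 (t : ℕ) (ht : 1 ≤ t) :
    ((2 * t).choose t : ℝ) ≤ 4 ^ t / Real.sqrt (Real.pi * t) := by
  have hlim : Tendsto (stirlingSeq ∘ Nat.succ) atTop (𝓝 (√π)) :=
    tendsto_stirlingSeq_sqrt_pi.comp (tendsto_add_atTop_nat 1)
  have hπ : ∀ n : ℕ, 1 ≤ n → Real.sqrt Real.pi ≤ stirlingSeq n := by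
    intro n hn
    obtain ⟨m, rfl⟩ := Nat.exists_eq_add_of_le hn
    have := stirlingSeq'_antitone.le_of_tendsto hlim m
    simpa [Nat.succ_eq_add_one, Nat.add_comm] using this
  obtain ⟨m, rfl⟩ := Nat.exists_eq_add_of_le ht
  set t := 1 + m with htdef
  have ht1 : (1:ℝ) ≤ t := by exact_mod_cast ht
  have htpos : (0:ℝ) < t := by linarith
  have hmono : stirlingSeq (2 * t) ≤ stirlingSeq t := by
    have : stirlingSeq ((2*m+1).succ) ≤ stirlingSeq (m.succ) :=
      stirlingSeq'_antitone (by omega)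
    convert this using 2 <;> omega
  have hst : Real.sqrt Real.pi ≤ stirlingSeq t := hπ t ht
  have hπpos : (0:ℝ) < Real.sqrt Real.pi := Real.sqrt_pos.mpr Real.pi_pos
  have hstpos : (0:ℝ) < stirlingSeq t := lt_of_lt_of_le hπpos hst
  have hs2nn : 0 ≤ stirlingSeq (2*t) := le_of_lt (lt_of_lt_of_le hπpos (hπ _ (by omega)))
  -- key inequality
  have key : Real.sqrt Real.pi * stirlingSeq (2*t) ≤ stirlingSeq t ^ 2 := by
    calc Real.sqrt Real.pi * stirlingSeq (2*t) ≤ Real.sqrt Real.pi * stirlingSeq t :=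
          mul_le_mul_of_nonneg_left hmono (le_of_lt hπpos)
      _ ≤ stirlingSeq t * stirlingSeq t := mul_le_mul_of_nonneg_right hst (le_of_lt hstpos)
      _ = stirlingSeq t ^ 2 := (sq _).symm
  -- factorial formulas
  have hA : (0:ℝ) < Real.sqrt (2 * t) * ((t : ℝ) / Real.exp 1) ^ t := by positivity
  have hB : (0:ℝ) < Real.sqrt (2 * (2*t : ℕ)) * (((2*t : ℕ) : ℝ) / Real.exp 1) ^ (2*t) := by
    positivity
  have hft : (t ! : ℝ) = stirlingSeq t * (Real.sqrt (2 * t) * ((t:ℝ) / Real.exp 1) ^ t) := by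
    rw [stirlingSeq, div_mul_cancel₀ _ (ne_of_gt hA)]
  have hf2t : ((2*t) ! : ℝ) =
      stirlingSeq (2*t) * (Real.sqrt (2 * (2*t:ℕ)) * (((2*t:ℕ):ℝ) / Real.exp 1) ^ (2*t)) := by
    rw [stirlingSeq, div_mul_cancel₀ _ (ne_of_gt hB)]
  have hchoose : ((2 * t).choose t : ℝ) = ((2*t)! : ℝ) / ((t ! : ℝ) * (t ! : ℝ)) := by
    rw [eq_div_iff (by positivity)]
    rw [← Nat.cast_mul, ← Nat.cast_mul]
    norm_cast
    have := Nat.choose_mul_factorial_mul_factorial (show t ≤ 2*t by omega)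
    rw [show 2*t - t = t by omega] at this
    rw [mul_assoc] at this
    exact this
  rw [hchoose, hft, hf2t]
  rw [div_le_div_iff₀ (by positivity) (Real.sqrt_pos.mpr (by positivity))]
  have e1 : Real.sqrt (2 * (2*t:ℕ)) = 2 * Real.sqrt t := by
    push_cast
    rw [show (2:ℝ) * (2 * t) = 2^2 * t by ring, Real.sqrt_mul (by positivity),
      Real.sqrt_sq (by norm_num)]
  have e2 : (((2*t:ℕ):ℝ) / Real.exp 1) ^ (2*t) = 4 ^ t * ((t:ℝ) / Real.exp 1) ^ (2*t) := by
    push_cast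
    rw [mul_div_assoc, mul_pow, pow_mul]
    norm_num
  have e3 : Real.sqrt (Real.pi * t) = Real.sqrt Real.pi * Real.sqrt t := Real.sqrt_mul (le_of_lt Real.pi_pos) _
  have e4 : Real.sqrt (2 * (t:ℝ)) ^ 2 = 2 * t := Real.sq_sqrt (by positivity)
  have e5 : Real.sqrt (t:ℝ) * Real.sqrt t = t := Real.mul_self_sqrt (le_of_lt htpos)
  rw [e1, e2, e3]
  have hexp : (0:ℝ) < ((t:ℝ) / Real.exp 1) ^ t := by positivity
  have hpow : ((t:ℝ) / Real.exp 1) ^ (2*t) = (((t:ℝ) / Real.exp 1) ^ t)^2 := by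
    rw [← pow_mul, mul_comm]
  rw [hpow]
  have h4 : (0:ℝ) < (4:ℝ)^t := by positivity
  set P := ((t:ℝ) / Real.exp 1) ^ t with hP
  have e4' : Real.sqrt (2*(t:ℝ)) * Real.sqrt (2*(t:ℝ)) = 2*t := Real.mul_self_sqrt (by positivity)
  have start : stirlingSeq (2*t) * (2*Real.sqrt (t:ℝ) * (4^t * P^2)) * (Real.sqrt Real.pi * Real.sqrt (t:ℝ))
      = (2*(4:ℝ)^t*P^2) * (Real.sqrt Real.pi * stirlingSeq (2*t)) * (Real.sqrt (t:ℝ) * Real.sqrt (t:ℝ)) := by ring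
  rw [e5] at start
  have fin : (4:ℝ)^t * (stirlingSeq t*(Real.sqrt (2*(t:ℝ))*P) * (stirlingSeq t*(Real.sqrt (2*(t:ℝ))*P)))
      = ((4:ℝ)^t*P^2*stirlingSeq t^2) * (Real.sqrt (2*(t:ℝ))*Real.sqrt (2*(t:ℝ))) := by ring
  rw [e4'] at fin
  rw [start, fin]
  nlinarith [mul_le_mul_of_nonneg_left key (show (0:ℝ) ≤ 2*(t:ℝ)*4^t*P^2 by positivity)]
end

section
/- For every positive integer j and every positive integer r, define A_j(r,r) := (−1/2)^r · ∑_{ℓ=0}^{⌊(r+1)/2⌋} C(r+1, ℓ) · j^{r−ℓ} · π^{r−2ℓ} · (r+1−ℓ)/(r+1−2ℓ)! · ∑_{m=0}^{r} (−1)^m · C(r,m) · (m+1)^{r−ℓ}. Then A_j(r,r) = (π·j/2)^r. -/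
noncomputable def T (r k : ℕ) : ℝ :=
  ∑ m ∈ Finset.range (r + 1), (-1 : ℝ) ^ m * (r.choose m : ℝ) * ((m : ℝ) + 1) ^ k

lemma hUlem (r k : ℕ) :
    ∑ m ∈ Finset.range (r + 1), (-1 : ℝ) ^ m * (r.choose m : ℝ) * ((m : ℝ) + 2) ^ k
      = ∑ i ∈ Finset.range (k + 1), (k.choose i : ℝ) * T r i := by
  have h : ∀ m : ℕ, ((m : ℝ) + 2) ^ k
      = ∑ i ∈ Finset.range (k + 1), ((m : ℝ) + 1) ^ i * (k.choose i : ℝ) := by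
    intro m
    rw [show ((m : ℝ) + 2) = ((m : ℝ) + 1) + 1 by ring]
    have := add_pow ((m : ℝ) + 1) 1 k
    simpa using this
  simp_rw [h, Finset.mul_sum]
  rw [Finset.sum_comm]
  unfold T
  simp_rw [Finset.mul_sum]
  refine Finset.sum_congr rfl fun i _ => Finset.sum_congr rfl fun m _ => by ring

lemma hBlem (r k : ℕ) :
    ∑ m ∈ Finset.range r, (-1 : ℝ) ^ m * (r.choose (m + 1) : ℝ) * ((m : ℝ) + 2) ^ k
      = 1 - T r k := by
  unfold T
  rw [Finset.sum_range_succ']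
  rw [eq_sub_iff_add_eq, ← add_assoc, ← Finset.sum_add_distrib]
  have : ∀ m ∈ Finset.range r,
      (-1 : ℝ) ^ m * (r.choose (m + 1) : ℝ) * ((m : ℝ) + 2) ^ k
        + (-1 : ℝ) ^ (m + 1) * (r.choose (m + 1) : ℝ) * (((m : ℕ) + 1 : ℕ) + 1 : ℝ) ^ k = 0 := by
    intro m _
    push_cast
    ring
  rw [Finset.sum_congr rfl this]
  simp

lemma Trec (r k : ℕ) : T (r + 1) k = - ∑ i ∈ Finset.range k, (k.choose i : ℝ) * T r i := by
  have step : T (r + 1) k =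
      (∑ m ∈ Finset.range (r + 1),
        (-((-1 : ℝ) ^ m * (r.choose m : ℝ) * ((m : ℝ) + 2) ^ k)
          + -((-1 : ℝ) ^ m * (r.choose (m + 1) : ℝ) * ((m : ℝ) + 2) ^ k))) + 1 := by
    unfold T
    rw [Finset.sum_range_succ']
    congr 1
    · refine Finset.sum_congr rfl fun m _ => ?_
      rw [Nat.choose_succ_succ]
      push_cast
      ring
    · simp
  have hB' : ∑ m ∈ Finset.range (r + 1), (-1 : ℝ) ^ m * (r.choose (m + 1) : ℝ) * ((m : ℝ) + 2) ^ k
      = 1 - T r k := by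
    rw [Finset.sum_range_succ]
    simp only [Nat.choose_succ_self, Nat.cast_zero, mul_zero, zero_mul, add_zero]
    exact hBlem r k
  rw [step, Finset.sum_add_distrib, Finset.sum_neg_distrib, Finset.sum_neg_distrib, hUlem, hB']
  rw [Finset.sum_range_succ]
  simp only [Nat.choose_self, Nat.cast_one, one_mul]
  ring

lemma Tval (r : ℕ) : ∀ k ≤ r, T r k = if k = r then (-1 : ℝ) ^ r * r.factorial else 0 := by
  induction r with
  | zero =>
    intro k hk
    interval_cases k
    simp [T]
  | succ r ih =>
    intro k hk
    rw [Trec]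
    by_cases hkr : k = r + 1
    · subst hkr
      simp only [if_pos rfl]
      rw [Finset.sum_range_succ]
      have h1 : ∀ i ∈ Finset.range r, ((r + 1).choose i : ℝ) * T r i = 0 := by
        intro i hi
        rw [ih i (le_of_lt (Finset.mem_range.mp hi)),
          if_neg (Nat.ne_of_lt (Finset.mem_range.mp hi))]
        ring
      rw [Finset.sum_congr rfl h1, ih r le_rfl, if_pos rfl]
      simp only [Finset.sum_const_zero, zero_add]
      rw [Nat.choose_succ_self_right]
      rw [Nat.factorial_succ]
      push_cast
      ring
    · rw [if_neg hkr]
      have hk' : k ≤ r := Nat.lt_succ_iff.mp (lt_of_le_of_ne hk hkr)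
      have h1 : ∀ i ∈ Finset.range k, (k.choose i : ℝ) * T r i = 0 := by
        intro i hi
        have : i < k := Finset.mem_range.mp hi
        rw [ih i (le_trans (le_of_lt this) hk'), if_neg (Nat.ne_of_lt (lt_of_lt_of_le this hk'))]
        ring
      rw [Finset.sum_congr rfl h1]
      simp

theorem stmt_12 (j r : ℕ) (hj : 0 < j) (hr : 0 < r) :
    ((-1 / 2 : ℝ)) ^ r *
      ∑ ℓ ∈ Finset.range ((r + 1) / 2 + 1),
        ((r + 1).choose ℓ : ℝ) * (j : ℝ) ^ (r - ℓ) * Real.pi ^ ((r : ℤ) - 2 * ℓ) *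
          (r + 1 - ℓ : ℝ) / ((r + 1 - 2 * ℓ).factorial : ℝ) *
          ∑ m ∈ Finset.range (r + 1), (-1 : ℝ) ^ m * (r.choose m : ℝ) * ((m : ℝ) + 1) ^ (r - ℓ) =
    (Real.pi * j / 2) ^ r := by
  have key : ∀ ℓ ∈ Finset.range ((r + 1) / 2 + 1),
      ((r + 1).choose ℓ : ℝ) * (j : ℝ) ^ (r - ℓ) * Real.pi ^ ((r : ℤ) - 2 * ℓ) *
          (r + 1 - ℓ : ℝ) / ((r + 1 - 2 * ℓ).factorial : ℝ) *
          (∑ m ∈ Finset.range (r + 1), (-1 : ℝ) ^ m * (r.choose m : ℝ) * ((m : ℝ) + 1) ^ (r - ℓ))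
      = if ℓ = 0 then (j : ℝ) ^ r * Real.pi ^ r * (-1 : ℝ) ^ r else 0 := by
    intro ℓ hℓ
    by_cases h0 : ℓ = 0
    · subst h0
      simp only [if_pos rfl]
      have := Tval r r le_rfl
      rw [if_pos rfl] at this
      rw [show r - 0 = r from rfl] at *
      unfold T at this
      rw [this]
      simp only [Nat.choose_zero_right, Nat.cast_one, one_mul, Nat.sub_zero, Nat.cast_zero,
        mul_zero, Int.sub_zero, Nat.mul_zero]
      rw [if_pos trivial, zpow_natCast, Nat.factorial_succ]
      push_cast
      field_simp
      ring
    · rw [if_neg h0]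
      have hℓle : ℓ ≤ (r + 1) / 2 := Nat.lt_succ_iff.mp (Finset.mem_range.mp hℓ)
      have hℓr : ℓ ≤ r := by omega
      have hlt : r - ℓ < r := by omega
      have := Tval r (r - ℓ) (Nat.sub_le r ℓ)
      rw [if_neg (Nat.ne_of_lt hlt)] at this
      unfold T at this
      rw [this]
      ring
  rw [Finset.sum_congr rfl key, Finset.sum_ite_eq' (Finset.range ((r+1)/2+1)) 0]
  rw [if_pos (by simp)]
  have hm : (-1 : ℝ) ^ r * (-1 : ℝ) ^ r = 1 := by rw [← mul_pow]; norm_num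
  rw [div_pow, div_pow, mul_pow]
  field_simp
  linear_combination hm
end

section
/- Let k be a positive integer and N a positive integer, and define A_k(2t) := (−k/4)^t · ∑_{ℓ=0}^{t} (−1)^ℓ · C(2t+1, t−ℓ) · (t+ℓ+1) · (π√k)^{2ℓ}/(2ℓ+1)!. Then for every integer t ≥ 1, |A_k(2t)| ≤ k^{t−1/2}·(2t+1)·sinh(π√k)/(π^{3/2}·√t). -/
open Real Finset

lemma cb_bound (n : ℕ) (hn : 1 ≤ n) :
    (((2 * n).choose n : ℕ) : ℝ) ≤ 4 ^ n / Real.sqrt (Real.pi * n) := by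
  have hW := Real.Wallis.le_W n
  rw [Real.Wallis.W_eq_factorial_ratio] at hW
  have hT : (0:ℝ) < ((2*n).factorial : ℝ) := by positivity
  have hF : (0:ℝ) < ((n).factorial : ℝ) := by positivity
  have hn' : (1:ℝ) ≤ (n:ℝ) := by exact_mod_cast hn
  have hπ := Real.pi_pos
  rw [div_mul_eq_mul_div, div_le_div_iff₀ (by positivity) (by positivity)] at hW
  have key : Real.pi * n * ((2*n).factorial : ℝ)^2 ≤ 2 ^ (4*n) * ((n).factorial : ℝ)^4 := by
    nlinarith [sq_nonneg ((2:ℝ)*n+1), mul_pos (mul_pos hπ (by linarith : (0:ℝ) < (n:ℝ))) (pow_pos hT 2)]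
  have hnat : (2*n).choose n * n.factorial * n.factorial = (2*n).factorial := by
    have h := Nat.choose_mul_factorial_mul_factorial (show n ≤ 2*n by omega)
    rw [show 2*n - n = n by omega] at h; exact h
  have hc : (((2 * n).choose n : ℕ) : ℝ) * ((n).factorial : ℝ) * ((n).factorial : ℝ)
      = ((2*n).factorial : ℝ) := by exact_mod_cast congrArg (Nat.cast (R := ℝ)) hnat
  set c : ℝ := (((2 * n).choose n : ℕ) : ℝ) with hcdef
  have hc0 : 0 ≤ c := Nat.cast_nonneg _
  have hsq : c^2 * (Real.pi * n) ≤ 16 ^ n := by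
    have h16 : (16:ℝ)^n = 2^(4*n) := by rw [pow_mul]; norm_num
    rw [h16]
    have e : c^2 * (Real.pi * n) * (((n).factorial : ℝ))^4 = Real.pi * n * ((2*n).factorial : ℝ)^2 := by
      rw [← hc]; ring
    have h3 : c^2 * (Real.pi * n) * (((n).factorial : ℝ))^4 ≤ 2^(4*n) * (((n).factorial : ℝ))^4 := by
      rw [e]; exact key
    exact le_of_mul_le_mul_right h3 (pow_pos hF 4)
  have h2 : c ≤ Real.sqrt (16 ^ n / (Real.pi * n)) := by
    rw [← Real.sqrt_sq hc0]
    apply Real.sqrt_le_sqrt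
    rw [le_div_iff₀ (by positivity)]
    exact hsq
  calc c ≤ Real.sqrt (16 ^ n / (Real.pi * n)) := h2
    _ = 4 ^ n / Real.sqrt (Real.pi * n) := by
        rw [Real.sqrt_div (by positivity) _]
        congr 1
        rw [show (16:ℝ)^n = (4^n)^2 by rw [← pow_mul, mul_comm, pow_mul]; norm_num]
        exact Real.sqrt_sq (by positivity)

lemma coef_le (t ℓ : ℕ) (h : ℓ ≤ t) :
    (2*t+1).choose (t-ℓ) * (t+ℓ+1) ≤ (2*t+1) * (2*t).choose t := by
  have h1 := Nat.add_one_mul_choose_eq (2*t) (t+ℓ)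
  have h2 : (2*t).choose (t+ℓ) = (2*t).choose (t-ℓ) := by
    rw [← Nat.choose_symm (show t+ℓ ≤ 2*t by omega), show 2*t - (t+ℓ) = t-ℓ by omega]
  have h3 : (2*t+1).choose (t+ℓ+1) = (2*t+1).choose (t-ℓ) := by
    rw [← Nat.choose_symm (show t+ℓ+1 ≤ 2*t+1 by omega), show 2*t+1 - (t+ℓ+1) = t-ℓ by omega]
  rw [h2, h3] at h1
  have h4 : (2*t).choose (t-ℓ) ≤ (2*t).choose t := by
    have := Nat.choose_le_middle (t-ℓ) (2*t)
    rwa [show 2*t/2 = t by omega] at this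
  calc (2*t+1).choose (t-ℓ) * (t+ℓ+1) = (2*t+1) * (2*t).choose (t-ℓ) := by omega
    _ ≤ (2*t+1) * (2*t).choose t := Nat.mul_le_mul_left _ h4

theorem stmt_15 (k t : ℕ) (hk : 0 < k) (ht : 1 ≤ t) :
    |(-(k : ℝ) / 4) ^ t *
        ∑ ℓ ∈ Finset.range (t + 1),
          (-1 : ℝ) ^ ℓ * ((2 * t + 1).choose (t - ℓ) : ℝ) * (t + ℓ + 1 : ℝ) *
            (Real.pi * Real.sqrt k) ^ (2 * ℓ) / ((2 * ℓ + 1).factorial : ℝ)| ≤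
      (k : ℝ) ^ ((t : ℝ) - 1 / 2) * (2 * t + 1 : ℝ) * Real.sinh (Real.pi * Real.sqrt k) /
        (Real.pi ^ ((3 : ℝ) / 2) * Real.sqrt t) := by
  have hπ := Real.pi_pos
  have hk' : (0:ℝ) < (k:ℝ) := by exact_mod_cast hk
  have ht' : (1:ℝ) ≤ (t:ℝ) := by exact_mod_cast ht
  set x : ℝ := Real.pi * Real.sqrt k with hxdef
  have hx : 0 < x := by
    apply mul_pos hπ
    exact Real.sqrt_pos.mpr hk'
  have hsinh : 0 < Real.sinh x := Real.sinh_pos_iff.mpr hx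
  set C : ℝ := (((2*t).choose t : ℕ) : ℝ) with hCdef
  have hC0 : 0 ≤ C := Nat.cast_nonneg _
  -- Step 1: abs bound via triangle inequality and coefficient bound
  have step1 : |(-(k : ℝ) / 4) ^ t *
        ∑ ℓ ∈ Finset.range (t + 1),
          (-1 : ℝ) ^ ℓ * ((2 * t + 1).choose (t - ℓ) : ℝ) * (t + ℓ + 1 : ℝ) *
            x ^ (2 * ℓ) / ((2 * ℓ + 1).factorial : ℝ)| ≤
      ((k:ℝ)/4)^t * ((2*t+1 : ℝ) * C * ∑ ℓ ∈ Finset.range (t + 1),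
          x ^ (2 * ℓ) / ((2 * ℓ + 1).factorial : ℝ)) := by
    rw [abs_mul, abs_pow]
    have habs : |(-(k:ℝ)/4)| = (k:ℝ)/4 := by
      rw [abs_div, abs_neg, abs_of_nonneg hk'.le]; norm_num
    rw [habs]
    apply mul_le_mul_of_nonneg_left _ (by positivity)
    calc |∑ ℓ ∈ Finset.range (t + 1),
          (-1 : ℝ) ^ ℓ * ((2 * t + 1).choose (t - ℓ) : ℝ) * (t + ℓ + 1 : ℝ) *
            x ^ (2 * ℓ) / ((2 * ℓ + 1).factorial : ℝ)|
        ≤ ∑ ℓ ∈ Finset.range (t + 1),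
          |(-1 : ℝ) ^ ℓ * ((2 * t + 1).choose (t - ℓ) : ℝ) * (t + ℓ + 1 : ℝ) *
            x ^ (2 * ℓ) / ((2 * ℓ + 1).factorial : ℝ)| := Finset.abs_sum_le_sum_abs _ _
      _ ≤ ∑ ℓ ∈ Finset.range (t + 1), (2*t+1 : ℝ) * C * (x ^ (2 * ℓ) / ((2 * ℓ + 1).factorial : ℝ)) := by
          apply Finset.sum_le_sum
          intro ℓ hℓ
          have hℓt : ℓ ≤ t := by simp at hℓ; omega
          have habs2 : |(-1 : ℝ) ^ ℓ * ((2 * t + 1).choose (t - ℓ) : ℝ) * (t + ℓ + 1 : ℝ) *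
            x ^ (2 * ℓ) / ((2 * ℓ + 1).factorial : ℝ)|
              = ((2 * t + 1).choose (t - ℓ) : ℝ) * (t + ℓ + 1 : ℝ) *
            x ^ (2 * ℓ) / ((2 * ℓ + 1).factorial : ℝ) := by
            rw [abs_div, abs_mul, abs_mul, abs_mul, abs_pow, abs_neg, abs_one, one_pow, one_mul,
              abs_of_nonneg (Nat.cast_nonneg _), abs_of_nonneg (by positivity : (0:ℝ) ≤ (t:ℝ)+ℓ+1),
              abs_of_nonneg (by positivity : (0:ℝ) ≤ x^(2*ℓ)),
              abs_of_nonneg (by positivity : (0:ℝ) ≤ ((2*ℓ+1).factorial : ℝ))]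
          rw [habs2]
          have hco : (((2*t+1).choose (t-ℓ) : ℕ):ℝ) * ((t:ℝ)+(ℓ:ℝ)+1) ≤ (2*(t:ℝ)+1) * C := by
            rw [hCdef]; exact_mod_cast coef_le t ℓ hℓt
          have hpos : (0:ℝ) ≤ x^(2*ℓ) / ((2*ℓ+1).factorial : ℝ) := by positivity
          calc ((2 * t + 1).choose (t - ℓ) : ℝ) * ((t:ℝ) + ℓ + 1) * x ^ (2 * ℓ) / ((2 * ℓ + 1).factorial : ℝ)
              = (((2*t+1).choose (t-ℓ) : ℕ):ℝ) * ((t:ℝ)+(ℓ:ℝ)+1) * (x^(2*ℓ) / ((2*ℓ+1).factorial : ℝ)) := by ring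
            _ ≤ (2*(t:ℝ)+1) * C * (x^(2*ℓ) / ((2*ℓ+1).factorial : ℝ)) := mul_le_mul_of_nonneg_right hco hpos
            _ = (2*(t:ℝ)+1) * C * (x ^ (2 * ℓ) / ((2 * ℓ + 1).factorial : ℝ)) := by ring
      _ = (2*t+1 : ℝ) * C * ∑ ℓ ∈ Finset.range (t + 1),
          x ^ (2 * ℓ) / ((2 * ℓ + 1).factorial : ℝ) := by rw [Finset.mul_sum]
  -- Step 2: sinh bound
  have step2 : ∑ ℓ ∈ Finset.range (t + 1), x ^ (2 * ℓ) / ((2 * ℓ + 1).factorial : ℝ)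
      ≤ Real.sinh x / x := by
    rw [le_div_iff₀ hx, Finset.sum_mul]
    have : ∀ ℓ, x ^ (2*ℓ) / ((2*ℓ+1).factorial : ℝ) * x = x^(2*ℓ+1) / ((2*ℓ+1).factorial : ℝ) := by
      intro ℓ; rw [pow_succ]; ring
    simp_rw [this]
    exact sum_le_hasSum _ (fun i _ => by positivity) (Real.hasSum_sinh x)
  -- combine
  have hCb : C ≤ 4^t / Real.sqrt (Real.pi * t) := cb_bound t ht
  have hchain : ((k:ℝ)/4)^t * ((2*t+1 : ℝ) * C * ∑ ℓ ∈ Finset.range (t + 1),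
          x ^ (2 * ℓ) / ((2 * ℓ + 1).factorial : ℝ))
      ≤ ((k:ℝ)/4)^t * ((2*t+1 : ℝ) * (4^t / Real.sqrt (Real.pi * t)) * (Real.sinh x / x)) := by
    apply mul_le_mul_of_nonneg_left _ (by positivity)
    apply mul_le_mul
    · exact mul_le_mul_of_nonneg_left hCb (by positivity)
    · exact step2
    · apply Finset.sum_nonneg; intro i _; positivity
    · positivity
  refine le_trans (le_trans step1 hchain) (le_of_eq ?_)
  -- final algebraic equality
  have h1 : (k:ℝ) ^ ((t : ℝ) - 1 / 2) = (k:ℝ)^t / Real.sqrt k := by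
    rw [Real.rpow_sub hk', Real.rpow_natCast, ← Real.sqrt_eq_rpow]
  have h2 : Real.pi ^ ((3:ℝ)/2) = Real.pi * Real.sqrt Real.pi := by
    rw [show (3:ℝ)/2 = 1 + 1/2 by norm_num, Real.rpow_add hπ, Real.rpow_one, ← Real.sqrt_eq_rpow]
  have h3 : Real.sqrt (Real.pi * t) = Real.sqrt Real.pi * Real.sqrt t := Real.sqrt_mul hπ.le _
  rw [h1, h2, h3, hxdef]
  have hsπ : (0:ℝ) < Real.sqrt Real.pi := Real.sqrt_pos.mpr hπ
  have hst : (0:ℝ) < Real.sqrt t := Real.sqrt_pos.mpr (by linarith)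
  have hsk : (0:ℝ) < Real.sqrt k := Real.sqrt_pos.mpr hk'
  rw [div_pow]
  field_simp
end

section
/- For every positive integer k, every nonnegative integer N, and every real n ≥ max(k², k²π²/4), one has e^{π√(n+k)}/(8(n+k)) · (π√(n+k))^{−(N+1)} ≤ e^{π√n}/(8n) · ((1+π)/π^{N+1}) · n^{−(N+1)/2}. -/
theorem stmt_17 (k : ℕ) (hk : 0 < k) (N : ℕ) (n : ℝ)
    (hn : n ≥ max ((k : ℝ) ^ 2) ((k : ℝ) ^ 2 * Real.pi ^ 2 / 4)) :
    Real.exp (Real.pi * Real.sqrt (n + k)) / (8 * (n + k)) *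
        (Real.pi * Real.sqrt (n + k)) ^ (-((N : ℝ) + 1)) ≤
      Real.exp (Real.pi * Real.sqrt n) / (8 * n) * ((1 + Real.pi) / Real.pi ^ (N + 1)) *
        n ^ (-((N : ℝ) + 1) / 2) := by
  have hπ := Real.pi_pos
  have hk1 : (1:ℝ) ≤ (k:ℝ) := by exact_mod_cast hk
  have hn2 : (k:ℝ)^2 ≤ n := le_trans (le_max_left _ _) hn
  have hn3 : (k:ℝ)^2 * Real.pi^2 / 4 ≤ n := le_trans (le_max_right _ _) hn
  have hn0 : (0:ℝ) < n := by nlinarith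
  have hnk0 : (0:ℝ) < n + k := by linarith
  have hsq : Real.sqrt n ^ 2 = n := Real.sq_sqrt hn0.le
  have hs0 : (0:ℝ) ≤ Real.sqrt n := Real.sqrt_nonneg n
  have hs1 : (k:ℝ) * Real.pi / 2 ≤ Real.sqrt n := by
    nlinarith [Real.sqrt_nonneg n]
  have hsqrt : Real.sqrt (n + k) ≤ Real.sqrt n + 1 / Real.pi := by
    have h4 : (k:ℝ) ≤ 2 * Real.sqrt n * (1 / Real.pi) := by
      rw [show 2 * Real.sqrt n * (1 / Real.pi) = 2 * Real.sqrt n / Real.pi by ring,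
        le_div_iff₀ hπ]
      linarith
    have h2 : n + (k:ℝ) ≤ (Real.sqrt n + 1 / Real.pi) ^ 2 := by
      rw [add_sq, hsq]
      nlinarith [sq_nonneg (1/Real.pi)]
    calc Real.sqrt (n + k) ≤ Real.sqrt ((Real.sqrt n + 1 / Real.pi)^2) :=
          Real.sqrt_le_sqrt h2
      _ = Real.sqrt n + 1 / Real.pi := Real.sqrt_sq (by positivity)
  have hexp : Real.exp (Real.pi * Real.sqrt (n+k)) ≤ Real.exp (Real.pi * Real.sqrt n) * (1 + Real.pi) := by
    have h3 : Real.pi * Real.sqrt (n+k) ≤ Real.pi * Real.sqrt n + 1 := by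
      have := mul_le_mul_of_nonneg_left hsqrt hπ.le
      rw [mul_add, mul_one_div, div_self hπ.ne'] at this
      exact this
    calc Real.exp (Real.pi * Real.sqrt (n+k)) ≤ Real.exp (Real.pi * Real.sqrt n + 1) :=
          Real.exp_le_exp.mpr h3
      _ = Real.exp (Real.pi * Real.sqrt n) * Real.exp 1 := Real.exp_add _ _
      _ ≤ Real.exp (Real.pi * Real.sqrt n) * (1 + Real.pi) := by
          have h := Real.exp_one_lt_d9
          have h2 := Real.pi_gt_three
          nlinarith [Real.exp_pos (Real.pi * Real.sqrt n)]
  have hrpow : (n + (k:ℝ)) ^ (-((N:ℝ)+1)/2) ≤ n ^ (-((N:ℝ)+1)/2) := by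
    apply Real.rpow_le_rpow_of_nonpos hn0 (by linarith)
    have : (0:ℝ) ≤ (N:ℝ) + 1 := by positivity
    linarith
  have hsplit : Real.sqrt (n+(k:ℝ)) ^ (-((N:ℝ)+1)) = (n+(k:ℝ)) ^ (-((N:ℝ)+1)/2) := by
    rw [Real.sqrt_eq_rpow, ← Real.rpow_mul hnk0.le]
    congr 1
    ring
  have hπpow : Real.pi ^ (-((N:ℝ)+1)) = ((Real.pi ^ (N+1) : ℝ))⁻¹ := by
    rw [← Real.rpow_natCast Real.pi (N+1), ← Real.rpow_neg hπ.le]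
    congr 1
    push_cast
    ring
  rw [Real.mul_rpow hπ.le (Real.sqrt_nonneg _), hsplit, hπpow]
  have h8 : (8*(n+(k:ℝ)))⁻¹ ≤ (8*n)⁻¹ := by
    apply inv_anti₀ (by positivity)
    linarith
  calc Real.exp (Real.pi * Real.sqrt (n + k)) / (8 * (n + k)) *
          ((Real.pi ^ (N+1))⁻¹ * (n+(k:ℝ)) ^ (-((N:ℝ)+1)/2))
      = (Real.exp (Real.pi * Real.sqrt (n+k)) * (8*(n+(k:ℝ)))⁻¹)
          * (n+(k:ℝ)) ^ (-((N:ℝ)+1)/2) * (Real.pi ^ (N+1))⁻¹ := by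
        rw [div_eq_mul_inv]; ring
    _ ≤ (Real.exp (Real.pi * Real.sqrt n) * (1+Real.pi) * (8*n)⁻¹)
          * n ^ (-((N:ℝ)+1)/2) * (Real.pi ^ (N+1))⁻¹ := by
        apply mul_le_mul_of_nonneg_right _ (by positivity)
        apply mul_le_mul _ hrpow (by positivity) (by positivity)
        calc Real.exp (Real.pi * Real.sqrt (n+k)) * (8*(n+(k:ℝ)))⁻¹
            ≤ (Real.exp (Real.pi * Real.sqrt n) * (1+Real.pi)) * (8*n)⁻¹ :=
              mul_le_mul hexp h8 (by positivity) (by positivity)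
          _ = Real.exp (Real.pi * Real.sqrt n) * (1+Real.pi) * (8*n)⁻¹ := by ring
    _ = Real.exp (Real.pi * Real.sqrt n) / (8 * n) * ((1 + Real.pi) / Real.pi ^ (N + 1)) *
          n ^ (-((N:ℝ)+1)/2) := by
        rw [div_eq_mul_inv, div_eq_mul_inv]; ring
end
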